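/- arXiv:1101.0637 — 3 statements merged into one kernel-verified Lean document; each statement's English description precedes it below -/
import Mathlib

section
/- Let m₁ ≤ m₂ ≤ m₃ be real-valued differentiable functions on an interval satisfying the ODE system m₁' = m₁² + m₂m₃, m₂' = m₂² + m₁m₃, m₃' = m₃² + m₁m₂. If m₁ + m₂ > 0 and m₃ > 0 throughout, then (m₁ + m₂)/m₃ is nondecreasing. -/
open Set

/-!
Along the ODE, the quotient rule gives
`((m₁ + m₂)/m₃)' = (m₁²(m₃ - m₂) + m₂²(m₃ - m₁)) / m₃²`,
and both terms of the numerator are nonnegative when `m₁ ≤ m₂ ≤ m₃`.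
-/

theorem sq_mul_sub_add_sq_mul_sub_nonneg {R : Type*} [CommRing R] [LinearOrder R]
    [IsStrictOrderedRing R] {a b c : R} (hab : a ≤ b) (hbc : b ≤ c) :
    0 ≤ a ^ 2 * (c - b) + b ^ 2 * (c - a) :=
  add_nonneg (mul_nonneg (sq_nonneg a) (sub_nonneg.2 hbc))
    (mul_nonneg (sq_nonneg b) (sub_nonneg.2 (hab.trans hbc)))

theorem hasDerivAt_add_div_of_eigenvalue_ode {𝕜 : Type*} [NontriviallyNormedField 𝕜]
    {m₁ m₂ m₃ : 𝕜 → 𝕜} {t : 𝕜}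
    (h₁ : HasDerivAt m₁ ((m₁ t) ^ 2 + m₂ t * m₃ t) t)
    (h₂ : HasDerivAt m₂ ((m₂ t) ^ 2 + m₁ t * m₃ t) t)
    (h₃ : HasDerivAt m₃ ((m₃ t) ^ 2 + m₁ t * m₂ t) t) (hm₃ : m₃ t ≠ 0) :
    HasDerivAt (fun s => (m₁ s + m₂ s) / m₃ s)
      ((m₁ t ^ 2 * (m₃ t - m₂ t) + m₂ t ^ 2 * (m₃ t - m₁ t)) / m₃ t ^ 2) t :=
  ((h₁.add h₂).div h₃ hm₃).congr_deriv (by simp only [Pi.add_apply]; ring)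

theorem ratio_monotone_general (T : ℝ) (m₁ m₂ m₃ : ℝ → ℝ)
    (hord : ∀ t ∈ Ico (0 : ℝ) T, m₁ t ≤ m₂ t ∧ m₂ t ≤ m₃ t)
    (h₁ : ∀ t ∈ Ico (0 : ℝ) T, HasDerivAt m₁ ((m₁ t) ^ 2 + m₂ t * m₃ t) t)
    (h₂ : ∀ t ∈ Ico (0 : ℝ) T, HasDerivAt m₂ ((m₂ t) ^ 2 + m₁ t * m₃ t) t)
    (h₃ : ∀ t ∈ Ico (0 : ℝ) T, HasDerivAt m₃ ((m₃ t) ^ 2 + m₁ t * m₂ t) t)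
    (hpos₃ : ∀ t ∈ Ico (0 : ℝ) T, 0 < m₃ t) :
    MonotoneOn (fun t => (m₁ t + m₂ t) / m₃ t) (Ico (0 : ℝ) T) := by
  have hderiv : ∀ t ∈ Ico (0 : ℝ) T, HasDerivAt (fun s => (m₁ s + m₂ s) / m₃ s)
      ((m₁ t ^ 2 * (m₃ t - m₂ t) + m₂ t ^ 2 * (m₃ t - m₁ t)) / m₃ t ^ 2) t :=
    fun t ht => hasDerivAt_add_div_of_eigenvalue_ode (h₁ t ht) (h₂ t ht) (h₃ t ht)
      (hpos₃ t ht).ne'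
  refine monotoneOn_of_hasDerivWithinAt_nonneg (convex_Ico 0 T)
    (fun t ht => (hderiv t ht).continuousAt.continuousWithinAt)
    (fun t ht => (hderiv t (interior_subset ht)).hasDerivWithinAt) fun t ht => ?_
  obtain ⟨h12, h23⟩ := hord t (interior_subset ht)
  exact div_nonneg (sq_mul_sub_add_sq_mul_sub_nonneg h12 h23) (sq_nonneg _)

/-- Along the curvature eigenvalue ODE, if `m₁ + m₂ > 0` and `m₃ > 0`, the ratio
`(m₁ + m₂)/m₃` is nondecreasing. -/
theorem ratio_monotone (T : ℝ) (m₁ m₂ m₃ : ℝ → ℝ)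
    (hord : ∀ t ∈ Ico (0 : ℝ) T, m₁ t ≤ m₂ t ∧ m₂ t ≤ m₃ t)
    (h₁ : ∀ t ∈ Ico (0 : ℝ) T, HasDerivAt m₁ ((m₁ t) ^ 2 + m₂ t * m₃ t) t)
    (h₂ : ∀ t ∈ Ico (0 : ℝ) T, HasDerivAt m₂ ((m₂ t) ^ 2 + m₁ t * m₃ t) t)
    (h₃ : ∀ t ∈ Ico (0 : ℝ) T, HasDerivAt m₃ ((m₃ t) ^ 2 + m₁ t * m₂ t) t)
    (hpos : ∀ t ∈ Ico (0 : ℝ) T, 0 < m₁ t + m₂ t)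
    (hpos₃ : ∀ t ∈ Ico (0 : ℝ) T, 0 < m₃ t) :
    MonotoneOn (fun t => (m₁ t + m₂ t) / m₃ t) (Ico (0 : ℝ) T) :=
  ratio_monotone_general T m₁ m₂ m₃ hord h₁ h₂ h₃ hpos₃
end

section
/- Let m₁ ≤ m₂ ≤ m₃ be differentiable functions on an interval satisfying m₁' = m₁² + m₂m₃, m₂' = m₂² + m₁m₃, m₃' = m₃² + m₁m₂. If m₁ + m₂ > 0 throughout, then m₁ + m₂ is nondecreasing. -/
open Set

theorem monotoneOn_of_hasDerivAt_nonneg {D : Set ℝ} (hD : Convex ℝ D) {f f' : ℝ → ℝ}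
    (hf : ∀ x ∈ D, HasDerivAt f (f' x) x) (hf'₀ : ∀ x ∈ D, 0 ≤ f' x) : MonotoneOn f D :=
  monotoneOn_of_hasDerivWithinAt_nonneg hD
    (fun x hx ↦ (hf x hx).continuousAt.continuousWithinAt)
    (fun x hx ↦ (hf x (interior_subset hx)).hasDerivWithinAt)
    (fun x hx ↦ hf'₀ x (interior_subset hx))

theorem sq_add_mul_add_sq_add_mul_nonneg {a b c : ℝ} (hab : 0 ≤ a + b) (hc : 0 ≤ c) :
    0 ≤ a ^ 2 + b * c + (b ^ 2 + a * c) := by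
  nlinarith [sq_nonneg a, sq_nonneg b, mul_nonneg hc hab]

theorem sum_monotone_general (T : ℝ) (m₁ m₂ m₃ : ℝ → ℝ)
    (hord : ∀ t ∈ Ico (0 : ℝ) T, m₁ t ≤ m₂ t ∧ m₂ t ≤ m₃ t)
    (h₁ : ∀ t ∈ Ico (0 : ℝ) T, HasDerivAt m₁ ((m₁ t) ^ 2 + m₂ t * m₃ t) t)
    (h₂ : ∀ t ∈ Ico (0 : ℝ) T, HasDerivAt m₂ ((m₂ t) ^ 2 + m₁ t * m₃ t) t)
    (hpos : ∀ t ∈ Ico (0 : ℝ) T, 0 < m₁ t + m₂ t) :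
    MonotoneOn (fun t => m₁ t + m₂ t) (Ico (0 : ℝ) T) := by
  refine monotoneOn_of_hasDerivAt_nonneg (convex_Ico 0 T)
    (fun t ht ↦ (h₁ t ht).add (h₂ t ht)) fun t ht ↦ ?_
  obtain ⟨h12, h23⟩ := hord t ht
  have hm₃ : 0 ≤ m₃ t := by linarith [hpos t ht]
  exact sq_add_mul_add_sq_add_mul_nonneg (hpos t ht).le hm₃

/-- Along the curvature eigenvalue ODE, if `m₁ + m₂ > 0` then `m₁ + m₂` is nondecreasing. -/
theorem sum_monotone (T : ℝ) (m₁ m₂ m₃ : ℝ → ℝ)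
    (hord : ∀ t ∈ Ico (0 : ℝ) T, m₁ t ≤ m₂ t ∧ m₂ t ≤ m₃ t)
    (h₁ : ∀ t ∈ Ico (0 : ℝ) T, HasDerivAt m₁ ((m₁ t) ^ 2 + m₂ t * m₃ t) t)
    (h₂ : ∀ t ∈ Ico (0 : ℝ) T, HasDerivAt m₂ ((m₂ t) ^ 2 + m₁ t * m₃ t) t)
    (h₃ : ∀ t ∈ Ico (0 : ℝ) T, HasDerivAt m₃ ((m₃ t) ^ 2 + m₁ t * m₂ t) t)
    (hpos : ∀ t ∈ Ico (0 : ℝ) T, 0 < m₁ t + m₂ t) :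
    MonotoneOn (fun t => m₁ t + m₂ t) (Ico (0 : ℝ) T) :=
  sum_monotone_general T m₁ m₂ m₃ hord h₁ h₂ hpos
end

section
/- Let m₁ ≤ m₂ ≤ m₃ be differentiable functions on [0,T) satisfying the eigenvalue ODE system m₁' = m₁² + m₂m₃, m₂' = m₂² + m₁m₃, m₃' = m₃² + m₁m₂. If at time 0 we have m₁ + m₂ ≥ C₁ > 0 and (m₁+m₂)/m₃ ≥ C₂ > 0, then these two inequalities persist for all t ∈ [0,T). -/
/-!
The sum `s = m₁ + m₂` satisfies `s' = m₁² + m₂² + m₃ s`, and `m₃ ≥ s / 2` by the ordering, so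
`s' > 0` wherever `s > 0`; hence `s` can never come back down to the level `C₁ > 0`.
Once `m₃ > 0`, the quotient `r = s / m₃` has `r' m₃² = m₁² (m₃ - m₂) + m₂² (m₃ - m₁) ≥ 0`,
so `r` is nondecreasing.
-/

open Set

section Barrier

variable {f f' : ℝ → ℝ} {a b : ℝ}

theorem le_of_hasDerivAt_of_pos_of_eq {c : ℝ} (hf : ∀ x ∈ Ico a b, HasDerivAt f (f' x) x)
    (ha : c ≤ f a) (hc : ∀ x ∈ Ico a b, f x = c → 0 < f' x) : ∀ x ∈ Ico a b, c ≤ f x := by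
  intro x hx
  have hsub : Icc a x ⊆ Ico a b := Icc_subset_Ico_right hx.2
  have hneg := image_le_of_deriv_right_lt_deriv_boundary' (a := a) (b := x) (f := fun y => -f y)
    (f' := fun y => -f' y) (B := fun _ => -c) (B' := fun _ => 0)
    (fun y hy => (hf y (hsub hy)).continuousAt.neg.continuousWithinAt)
    (fun y hy => (hf y (hsub (Ico_subset_Icc_self hy))).neg.hasDerivWithinAt)
    (neg_le_neg ha) continuousOn_const (fun _ _ => hasDerivWithinAt_const _ _ _)
    (fun y hy hfy => neg_neg_of_pos (hc y (Ico_subset_Ico_right hx.2.le hy) (neg_inj.1 hfy)))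
    ⟨hx.1, le_rfl⟩
  exact neg_le_neg_iff.1 hneg

theorem monotoneOn_Ico_of_hasDerivAt_nonneg (hf : ∀ x ∈ Ico a b, HasDerivAt f (f' x) x)
    (hf' : ∀ x ∈ Ico a b, 0 ≤ f' x) : MonotoneOn f (Ico a b) :=
  monotoneOn_of_hasDerivWithinAt_nonneg (convex_Ico a b)
    (fun x hx => (hf x hx).continuousAt.continuousWithinAt)
    (fun x hx => (hf x (interior_subset hx)).hasDerivWithinAt) fun x hx => hf' x (interior_subset hx)

end Barrier

section EigenvalueODE

variable {m₁ m₂ m₃ : ℝ}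

theorem eigenvalue_ode_sum_pos (h₁₂ : m₁ ≤ m₂) (h₂₃ : m₂ ≤ m₃) (hs : 0 < m₁ + m₂) :
    0 < m₁ ^ 2 + m₂ * m₃ + (m₂ ^ 2 + m₁ * m₃) := by
  have hm₃ : 0 < m₃ := by linarith
  nlinarith [sq_nonneg m₁, sq_nonneg m₂, mul_pos hm₃ hs]

theorem eigenvalue_ode_ratio_numerator_nonneg (h₁₂ : m₁ ≤ m₂) (h₂₃ : m₂ ≤ m₃) :
    0 ≤ (m₁ ^ 2 + m₂ * m₃ + (m₂ ^ 2 + m₁ * m₃)) * m₃ - (m₁ + m₂) * (m₃ ^ 2 + m₁ * m₂) := by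
  have key : (m₁ ^ 2 + m₂ * m₃ + (m₂ ^ 2 + m₁ * m₃)) * m₃ - (m₁ + m₂) * (m₃ ^ 2 + m₁ * m₂)
      = m₁ ^ 2 * (m₃ - m₂) + m₂ ^ 2 * (m₃ - m₁) := by ring
  rw [key]
  have := mul_nonneg (sq_nonneg m₁) (sub_nonneg.2 h₂₃)
  have := mul_nonneg (sq_nonneg m₂) (sub_nonneg.2 (h₁₂.trans h₂₃))
  linarith

end EigenvalueODE

theorem pinching_persists_general (T : ℝ) (C₁ C₂ : ℝ) (hC₁ : 0 < C₁)
    (m₁ m₂ m₃ : ℝ → ℝ)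
    (hord : ∀ t ∈ Ico (0 : ℝ) T, m₁ t ≤ m₂ t ∧ m₂ t ≤ m₃ t)
    (h₁ : ∀ t ∈ Ico (0 : ℝ) T, HasDerivAt m₁ ((m₁ t) ^ 2 + m₂ t * m₃ t) t)
    (h₂ : ∀ t ∈ Ico (0 : ℝ) T, HasDerivAt m₂ ((m₂ t) ^ 2 + m₁ t * m₃ t) t)
    (h₃ : ∀ t ∈ Ico (0 : ℝ) T, HasDerivAt m₃ ((m₃ t) ^ 2 + m₁ t * m₂ t) t)
    (hinit₁ : C₁ ≤ m₁ 0 + m₂ 0)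
    (hinit₂ : C₂ ≤ (m₁ 0 + m₂ 0) / m₃ 0) :
    ∀ t ∈ Ico (0 : ℝ) T, C₁ ≤ m₁ t + m₂ t ∧ C₂ ≤ (m₁ t + m₂ t) / m₃ t := by
  have hsum : ∀ t ∈ Ico (0 : ℝ) T, C₁ ≤ m₁ t + m₂ t :=
    le_of_hasDerivAt_of_pos_of_eq (fun t ht => (h₁ t ht).add (h₂ t ht)) hinit₁
      fun t ht hs => eigenvalue_ode_sum_pos (hord t ht).1 (hord t ht).2 (hs ▸ hC₁)
  have hm₃ : ∀ t ∈ Ico (0 : ℝ) T, 0 < m₃ t := fun t ht => by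
    linarith [hsum t ht, hord t ht]
  have hratio : MonotoneOn (fun t => (m₁ t + m₂ t) / m₃ t) (Ico 0 T) :=
    monotoneOn_Ico_of_hasDerivAt_nonneg
      (fun t ht => ((h₁ t ht).add (h₂ t ht)).div (h₃ t ht) (hm₃ t ht).ne')
      fun t ht => div_nonneg
        (eigenvalue_ode_ratio_numerator_nonneg (hord t ht).1 (hord t ht).2) (sq_nonneg _)
  intro t ht
  have h0 : (0 : ℝ) ∈ Ico 0 T := ⟨le_rfl, ht.1.trans_lt ht.2⟩
  exact ⟨hsum t ht, hinit₂.trans (hratio h0 ht ht.1)⟩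

/-- Persistence of the pinching conditions along the curvature eigenvalue ODE:
if `m₁ + m₂ ≥ C₁ > 0` and `(m₁+m₂)/m₃ ≥ C₂ > 0` at time `0`, then these hold
for all `t ∈ [0,T)`. -/
theorem pinching_persists (T : ℝ) (hT : 0 < T) (C₁ C₂ : ℝ) (hC₁ : 0 < C₁) (hC₂ : 0 < C₂)
    (m₁ m₂ m₃ : ℝ → ℝ)
    (hord : ∀ t ∈ Ico (0 : ℝ) T, m₁ t ≤ m₂ t ∧ m₂ t ≤ m₃ t)
    (h₁ : ∀ t ∈ Ico (0 : ℝ) T, HasDerivAt m₁ ((m₁ t) ^ 2 + m₂ t * m₃ t) t)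
    (h₂ : ∀ t ∈ Ico (0 : ℝ) T, HasDerivAt m₂ ((m₂ t) ^ 2 + m₁ t * m₃ t) t)
    (h₃ : ∀ t ∈ Ico (0 : ℝ) T, HasDerivAt m₃ ((m₃ t) ^ 2 + m₁ t * m₂ t) t)
    (hinit₁ : C₁ ≤ m₁ 0 + m₂ 0)
    (hinit₂ : C₂ ≤ (m₁ 0 + m₂ 0) / m₃ 0) :
    ∀ t ∈ Ico (0 : ℝ) T, C₁ ≤ m₁ t + m₂ t ∧ C₂ ≤ (m₁ t + m₂ t) / m₃ t :=
  pinching_persists_general T C₁ C₂ hC₁ m₁ m₂ m₃ hord h₁ h₂ h₃ hinit₁ hinit₂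
end
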